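/- Let A and B be disjoint cubic graphs with v(A) ≡ 2 (mod 6) and v(B) ≡ 4 (mod 6), let a = a₁a₂ be an edge of A and b = b₁b₂ an edge of B, and suppose that B − b₁ has no Λ-factor. Let G = AabB. Then v(G) ≡ 0 (mod 6) and every Λ-factor of G contains the edge a₂b₂ (i.e., G has no Λ-factor avoiding a₂b₂). -/

import Mathlib

open SimpleGraph

/-- `p` encodes a 3-vertex path (a `Λ`) in `G`: three distinct vertices, the first
adjacent to the second and the second adjacent to the third. -/
def IsPathL {V : Type*} (G : SimpleGraph V) (p : V × V × V) : Prop :=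
  p.1 ≠ p.2.1 ∧ p.2.1 ≠ p.2.2 ∧ p.1 ≠ p.2.2 ∧ G.Adj p.1 p.2.1 ∧ G.Adj p.2.1 p.2.2

/-- The vertex set of an encoded 3-vertex path. -/
def pVerts {V : Type*} (p : V × V × V) : Set V := {p.1, p.2.1, p.2.2}

/-- The edge set of an encoded 3-vertex path. -/
def pEdges {V : Type*} (p : V × V × V) : Set (Sym2 V) := {s(p.1, p.2.1), s(p.2.1, p.2.2)}

/-- A `Λ`-packing of `G`: a collection of pairwise vertex-disjoint 3-vertex paths of `G`. -/
def IsPacking {V : Type*} (G : SimpleGraph V) (P : Finset (V × V × V)) : Prop :=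
  (∀ p ∈ P, IsPathL G p) ∧
  ∀ p ∈ P, ∀ q ∈ P, p ≠ q → Disjoint (pVerts p) (pVerts q)

/-- A `Λ`-factor of the induced subgraph of `G` on the vertex set `S`:
a `Λ`-packing whose paths lie in `S` and together cover all of `S`. -/
def IsFactorOn {V : Type*} (G : SimpleGraph V) (S : Set V) (P : Finset (V × V × V)) : Prop :=
  IsPacking G P ∧ (∀ p ∈ P, pVerts p ⊆ S) ∧ ∀ v ∈ S, ∃ p ∈ P, v ∈ pVerts p

/-- A `Λ`-factor of `G`. -/
def IsFactor {V : Type*} (G : SimpleGraph V) (P : Finset (V × V × V)) : Prop :=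
  IsFactorOn G Set.univ P

/-- The packing `P` contains the edge `e`. -/
def PContains {V : Type*} (P : Finset (V × V × V)) (e : Sym2 V) : Prop :=
  ∃ p ∈ P, e ∈ pEdges p

/-- `λ(G)`: the maximum number of pairwise disjoint 3-vertex paths in `G`. -/
noncomputable def lambdaNum {V : Type*} (G : SimpleGraph V) [Fintype V] : ℕ :=
  sSup {n | ∃ P : Finset (V × V × V), IsPacking G P ∧ P.card = n}

/-- Every vertex of `G` has degree exactly 3. -/
def IsCubic {V : Type*} (G : SimpleGraph V) : Prop :=
  ∀ v, (G.neighborSet v).ncard = 3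

/-- `G` is `k`-connected: more than `k` vertices, and deleting any set of fewer than
`k` vertices leaves a connected graph. -/
def KConnected {V : Type*} (k : ℕ) (G : SimpleGraph V) [Fintype V] : Prop :=
  k < Fintype.card V ∧ ∀ S : Set V, S.ncard < k → (G.induce Sᶜ).Connected

/-- The graph `AabB`: delete the edge `a = a₁a₂` from `A` and the edge `b = b₁b₂` from
`B`, and add the two edges `a₁b₁` and `a₂b₂`. -/
def edgeGlue {VA VB : Type*} (A : SimpleGraph VA) (B : SimpleGraph VB)
    (a1 a2 : VA) (b1 b2 : VB) : SimpleGraph (VA ⊕ VB) :=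
  SimpleGraph.fromRel fun u v =>
    match u, v with
    | Sum.inl x, Sum.inl y => (A.deleteEdges {s(a1, a2)}).Adj x y
    | Sum.inr x, Sum.inr y => (B.deleteEdges {s(b1, b2)}).Adj x y
    | Sum.inl x, Sum.inr y => (x = a1 ∧ y = b1) ∨ (x = a2 ∧ y = b2)
    | Sum.inr _, Sum.inl _ => False

/-- The graph `Aa|bB`: delete the edge `a = a₁a₂` from `A` and the edge `b = b₁b₂` from
`B`, add two new vertices `z₁, z₂` (the `Fin 2` part, indexed `0, 1`) and the five edges
`a₁z₁, z₁b₁, a₂z₂, z₂b₂, z₁z₂`; `z₁z₂` is the middle edge. -/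
def edgeGlueMid {VA VB : Type*} (A : SimpleGraph VA) (B : SimpleGraph VB)
    (a1 a2 : VA) (b1 b2 : VB) : SimpleGraph ((VA ⊕ VB) ⊕ Fin 2) :=
  SimpleGraph.fromRel fun u v =>
    match u, v with
    | Sum.inl (Sum.inl x), Sum.inl (Sum.inl y) => (A.deleteEdges {s(a1, a2)}).Adj x y
    | Sum.inl (Sum.inr x), Sum.inl (Sum.inr y) => (B.deleteEdges {s(b1, b2)}).Adj x y
    | Sum.inl (Sum.inl x), Sum.inr j => (j = 0 ∧ x = a1) ∨ (j = 1 ∧ x = a2)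
    | Sum.inl (Sum.inr y), Sum.inr j => (j = 0 ∧ y = b1) ∨ (j = 1 ∧ y = b2)
    | Sum.inr j, Sum.inr j' => j = 0 ∧ j' = 1
    | _, _ => False

lemma glue_adj {VA VB : Type*} {A : SimpleGraph VA} {B : SimpleGraph VB}
    {a1 a2 : VA} {b1 b2 : VB} {u v : VA ⊕ VB}
    (h : (edgeGlue A B a1 a2 b1 b2).Adj u v) :
    (∃ x y, u = Sum.inl x ∧ v = Sum.inl y ∧ A.Adj x y) ∨
    (∃ x y, u = Sum.inr x ∧ v = Sum.inr y ∧ B.Adj x y) ∨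
    s(u, v) = s((Sum.inl a1 : VA ⊕ VB), Sum.inr b1) ∨
    s(u, v) = s((Sum.inl a2 : VA ⊕ VB), Sum.inr b2) := by
  rw [edgeGlue, SimpleGraph.fromRel_adj] at h
  obtain ⟨hne, h | h⟩ := h <;>
    rcases u with x | x <;> rcases v with y | y <;>
    simp only [SimpleGraph.deleteEdges_adj] at h
  · exact Or.inl ⟨x, y, rfl, rfl, h.1⟩
  · rcases h with ⟨rfl, rfl⟩ | ⟨rfl, rfl⟩
    · exact Or.inr (Or.inr (Or.inl rfl))
    · exact Or.inr (Or.inr (Or.inr rfl))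
  · exact Or.inr (Or.inl ⟨x, y, rfl, rfl, h.1⟩)
  · exact Or.inl ⟨x, y, rfl, rfl, h.1.symm⟩
  · rcases h with ⟨rfl, rfl⟩ | ⟨rfl, rfl⟩
    · exact Or.inr (Or.inr (Or.inl Sym2.eq_swap))
    · exact Or.inr (Or.inr (Or.inr Sym2.eq_swap))
  · exact Or.inr (Or.inl ⟨x, y, rfl, rfl, h.1.symm⟩)

lemma classify {VA VB : Type*} {A : SimpleGraph VA} {B : SimpleGraph VB}
    {a1 a2 : VA} {b1 b2 : VB} {u v w : VA ⊕ VB}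
    (h12 : u ≠ v) (h23 : v ≠ w) (h13 : u ≠ w)
    (ha1 : (edgeGlue A B a1 a2 b1 b2).Adj u v)
    (ha2 : (edgeGlue A B a1 a2 b1 b2).Adj v w)
    (he1 : s(u, v) ≠ s((Sum.inl a2 : VA ⊕ VB), Sum.inr b2))
    (he2 : s(v, w) ≠ s((Sum.inl a2 : VA ⊕ VB), Sum.inr b2)) :
    (∃ x y z : VA, (u, v, w) = (Sum.inl x, Sum.inl y, Sum.inl z)) ∨
    (∃ x y z : VB, (u, v, w) = (Sum.inr x, Sum.inr y, Sum.inr z)) ∨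
    (Sum.inl a1 ∈ pVerts (u, v, w) ∧ Sum.inr b1 ∈ pVerts (u, v, w) ∧
      ((∀ t ∈ pVerts (u, v, w), t.isRight → t = Sum.inr b1) ∨
       (∃ y : VB, y ≠ b1 ∧ Sum.inr y ∈ pVerts (u, v, w) ∧
         ∀ t ∈ pVerts (u, v, w), t.isRight → t = Sum.inr b1 ∨ t = Sum.inr y))) := by
  rcases glue_adj ha1 with ⟨x, y, rfl, rfl, hA⟩ | ⟨x, y, rfl, rfl, hB1⟩ | hc1 | hc1
  · -- edge1 in A
    rcases glue_adj ha2 with ⟨y', z, hy, rfl, hA'⟩ | ⟨y', z, hy, rfl, hB2⟩ | hc2 | hc2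
    · obtain rfl : y = y' := Sum.inl.inj hy
      exact Or.inl ⟨x, y, z, rfl⟩
    · exact absurd hy (by simp)
    · rw [Sym2.eq_iff] at hc2
      rcases hc2 with ⟨h1, h2⟩ | ⟨h1, h2⟩
      · obtain rfl : y = a1 := Sum.inl.inj h1
        subst h2
        refine Or.inr (Or.inr ⟨by simp [pVerts], by simp [pVerts], Or.inl ?_⟩)
        intro t ht hr
        simp only [pVerts, Set.mem_insert_iff, Set.mem_singleton_iff] at ht
        rcases ht with rfl | rfl | rfl <;> simp_all
      · exact absurd h1 (by simp)
    · exact absurd hc2 he2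
  · -- edge1 in B
    rcases glue_adj ha2 with ⟨y', z, hy, rfl, hA'⟩ | ⟨y', z, hy, rfl, hB2⟩ | hc2 | hc2
    · exact absurd hy (by simp)
    · obtain rfl : y = y' := Sum.inr.inj hy
      exact Or.inr (Or.inl ⟨x, y, z, rfl⟩)
    · rw [Sym2.eq_iff] at hc2
      rcases hc2 with ⟨h1, h2⟩ | ⟨h1, h2⟩
      · exact absurd h1 (by simp)
      · obtain rfl : b1 = y := (Sum.inr.inj h1).symm
        subst h2
        have hxb : x ≠ b1 := fun h => h12 (by rw [h])
        refine Or.inr (Or.inr ⟨by simp [pVerts], by simp [pVerts],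
          Or.inr ⟨x, hxb, by simp [pVerts], ?_⟩⟩)
        intro t ht hr
        simp only [pVerts, Set.mem_insert_iff, Set.mem_singleton_iff] at ht
        rcases ht with rfl | rfl | rfl <;> simp_all
    · exact absurd hc2 he2
  · -- edge1 is the a1b1 edge
    rw [Sym2.eq_iff] at hc1
    rcases hc1 with ⟨rfl, rfl⟩ | ⟨rfl, rfl⟩
    · -- u = inl a1, v = inr b1
      rcases glue_adj ha2 with ⟨y', z, hy, rfl, hA'⟩ | ⟨y', z, hy, rfl, hB2⟩ | hc2 | hc2
      · exact absurd hy (by simp)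
      · obtain rfl : b1 = y' := Sum.inr.inj hy
        have hzb : z ≠ b1 := fun h => h23 (by rw [h])
        refine Or.inr (Or.inr ⟨by simp [pVerts], by simp [pVerts],
          Or.inr ⟨z, hzb, by simp [pVerts], ?_⟩⟩)
        intro t ht hr
        simp only [pVerts, Set.mem_insert_iff, Set.mem_singleton_iff] at ht
        rcases ht with rfl | rfl | rfl <;> simp_all
      · rw [Sym2.eq_iff] at hc2
        rcases hc2 with ⟨h1, h2⟩ | ⟨h1, h2⟩
        · exact absurd h1 (by simp)
        · exact absurd h2.symm h13
      · exact absurd hc2 he2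
    · -- u = inr b1, v = inl a1
      rcases glue_adj ha2 with ⟨y', z, hy, rfl, hA'⟩ | ⟨y', z, hy, rfl, hB2⟩ | hc2 | hc2
      · refine Or.inr (Or.inr ⟨by simp [pVerts], by simp [pVerts], Or.inl ?_⟩)
        intro t ht hr
        simp only [pVerts, Set.mem_insert_iff, Set.mem_singleton_iff] at ht
        rcases ht with rfl | rfl | rfl <;> simp_all
      · exact absurd hy (by simp)
      · rw [Sym2.eq_iff] at hc2
        rcases hc2 with ⟨h1, h2⟩ | ⟨h1, h2⟩
        · exact absurd h2.symm h13
        · exact absurd h1 (by simp)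
      · exact absurd hc2 he2
  · exact absurd hc1 he1

lemma glue_adj_rr {VA VB : Type*} {A : SimpleGraph VA} {B : SimpleGraph VB}
    {a1 a2 : VA} {b1 b2 : VB} {x y : VB}
    (h : (edgeGlue A B a1 a2 b1 b2).Adj (Sum.inr x) (Sum.inr y)) : B.Adj x y := by
  rcases glue_adj h with ⟨x', y', h1, _, _⟩ | ⟨x', y', h1, h2, hB'⟩ | hc | hc
  · exact absurd h1 (by simp)
  · obtain rfl : x = x' := Sum.inr.inj h1
    obtain rfl : y = y' := Sum.inr.inj h2
    exact hB'
  · rw [Sym2.eq_iff] at hc; simp at hc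
  · rw [Sym2.eq_iff] at hc; simp at hc

lemma mem_fin_pVerts {V : Type*} [DecidableEq V] {t : V} {p : V × V × V} :
    t ∈ ({p.1, p.2.1, p.2.2} : Finset V) ↔ t ∈ pVerts p := by
  simp [pVerts]

/-- auxiliary: a triple whose components all lie in the right summand -/
def allR {VA VB : Type*} (p : (VA ⊕ VB) × (VA ⊕ VB) × (VA ⊕ VB)) : Prop :=
  p.1.isRight ∧ p.2.1.isRight ∧ p.2.2.isRight

instance {VA VB : Type*} : DecidablePred (allR (VA := VA) (VB := VB)) := fun p => by
  unfold allR; infer_instance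

lemma allR_iff {VA VB : Type*} {p : (VA ⊕ VB) × (VA ⊕ VB) × (VA ⊕ VB)} :
    allR p ↔ ∃ x y z : VB, p = (Sum.inr x, Sum.inr y, Sum.inr z) := by
  obtain ⟨u, v, w⟩ := p
  rcases u with x | x <;> rcases v with y | y <;> rcases w with z | z <;>
    simp [allR]

/-- auxiliary: project a triple to the right summand -/
def toB {VA VB : Type*} (b : VB) (p : (VA ⊕ VB) × (VA ⊕ VB) × (VA ⊕ VB)) : VB × VB × VB :=
  (Sum.elim (fun _ => b) id p.1, Sum.elim (fun _ => b) id p.2.1, Sum.elim (fun _ => b) id p.2.2)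

lemma toB_inr {VA VB : Type*} (b : VB) (x y z : VB) :
    toB b ((Sum.inr x, Sum.inr y, Sum.inr z) : (VA ⊕ VB) × (VA ⊕ VB) × (VA ⊕ VB)) = (x, y, z) := by
  simp [toB]

set_option maxHeartbeats 1000000 in
/-- If `A, B` are cubic, `v(A) ≡ 2 (mod 6)`, `v(B) ≡ 4 (mod 6)`, and `B − b₁` has no
`Λ`-factor, then `G = AabB` satisfies `v(G) ≡ 0 (mod 6)` and every `Λ`-factor of `G`
contains the edge `a₂b₂`. -/
theorem stmt16 {VA VB : Type*} [Fintype VA] [Fintype VB]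
    (A : SimpleGraph VA) (B : SimpleGraph VB) (a1 a2 : VA) (b1 b2 : VB)
    (hcA : IsCubic A) (hcB : IsCubic B)
    (hmA : Fintype.card VA % 6 = 2) (hmB : Fintype.card VB % 6 = 4)
    (ha : A.Adj a1 a2) (hb : B.Adj b1 b2)
    (hB : ¬ ∃ P, IsFactorOn B ({b1} : Set VB)ᶜ P) :
    Fintype.card (VA ⊕ VB) % 6 = 0 ∧
    ∀ P, IsFactor (edgeGlue A B a1 a2 b1 b2) P →
      PContains P s((Sum.inl a2 : VA ⊕ VB), (Sum.inr b2 : VA ⊕ VB)) := by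
  classical
  constructor
  · rw [Fintype.card_sum]; omega
  intro P hP
  by_contra hC
  obtain ⟨⟨hpath, hdisj⟩, hsub, hcover⟩ := hP
  have hne : ∀ p ∈ P, s((Sum.inl a2 : VA ⊕ VB), Sum.inr b2) ∉ pEdges p :=
    fun p hp hmem => hC ⟨p, hp, hmem⟩
  -- classification of every path
  have hclass : ∀ p ∈ P,
      (∃ x y z : VA, p = (Sum.inl x, Sum.inl y, Sum.inl z)) ∨
      (∃ x y z : VB, p = (Sum.inr x, Sum.inr y, Sum.inr z)) ∨
      (Sum.inl a1 ∈ pVerts p ∧ Sum.inr b1 ∈ pVerts p ∧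
        ((∀ t ∈ pVerts p, t.isRight → t = Sum.inr b1) ∨
         (∃ y : VB, y ≠ b1 ∧ Sum.inr y ∈ pVerts p ∧
           ∀ t ∈ pVerts p, t.isRight → t = Sum.inr b1 ∨ t = Sum.inr y))) := by
    intro p hp
    obtain ⟨h12, h23, h13, g1, g2⟩ := hpath p hp
    have he' := hne p hp
    simp only [pEdges, Set.mem_insert_iff, Set.mem_singleton_iff, not_or] at he'
    exact classify h12 h23 h13 g1 g2 (fun h => he'.1 h.symm) (fun h => he'.2 h.symm)
  -- two paths sharing a vertex are equal
  have hsame : ∀ (t : VA ⊕ VB), ∀ p ∈ P, ∀ q ∈ P, t ∈ pVerts p → t ∈ pVerts q → p = q := by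
    intro t p hp q hq h1 h2
    by_contra hne'
    exact (Set.disjoint_left.mp (hdisj p hp q hq hne') h1) h2
  -- the path containing inl a1
  obtain ⟨p0, hp0P, hp0a⟩ := hcover (Sum.inl a1) (Set.mem_univ _)
  have hAorB : ∀ p ∈ P, p ≠ p0 →
      (∃ x y z : VA, p = (Sum.inl x, Sum.inl y, Sum.inl z)) ∨
      (∃ x y z : VB, p = (Sum.inr x, Sum.inr y, Sum.inr z)) := by
    intro p hp hne'
    rcases hclass p hp with h | h | h
    · exact Or.inl h
    · exact Or.inr h
    · exact absurd (hsame (Sum.inl a1) p hp p0 hp0P h.1 hp0a) hne'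
  -- counting machinery
  have hvb3 : Fintype.card VB % 3 = 1 := by omega
  have hbi : Finset.univ.filter (fun v : VA ⊕ VB => v.isRight) =
      P.biUnion (fun p => Finset.filter (fun v => v.isRight) {p.1, p.2.1, p.2.2}) := by
    ext t
    simp only [Finset.mem_filter, Finset.mem_univ, true_and, Finset.mem_biUnion]
    constructor
    · intro ht
      obtain ⟨p, hpP, hpt⟩ := hcover t (Set.mem_univ t)
      exact ⟨p, hpP, mem_fin_pVerts.mpr hpt, ht⟩
    · rintro ⟨p, hpP, ht⟩
      exact ht.2
  have hdisjF : ∀ p ∈ P, ∀ q ∈ P, p ≠ q →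
      Disjoint (Finset.filter (fun v : VA ⊕ VB => v.isRight) {p.1, p.2.1, p.2.2})
        (Finset.filter (fun v => v.isRight) {q.1, q.2.1, q.2.2}) := by
    intro p hp q hq hne'
    rw [Finset.disjoint_left]
    intro t ht1 ht2
    exact (Set.disjoint_left.mp (hdisj p hp q hq hne')
      (mem_fin_pVerts.mp (Finset.mem_filter.mp ht1).1))
      (mem_fin_pVerts.mp (Finset.mem_filter.mp ht2).1)
  have hcardsum : Fintype.card VB =
      ∑ p ∈ P, (Finset.filter (fun v : VA ⊕ VB => v.isRight) {p.1, p.2.1, p.2.2}).card := by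
    rw [← Finset.card_biUnion hdisjF, ← hbi]
    have h1 : Finset.univ.filter (fun v : VA ⊕ VB => v.isRight) =
        Finset.univ.image Sum.inr := by
      ext t; cases t <;> simp
    rw [h1, Finset.card_image_of_injective _ Sum.inr_injective, Finset.card_univ]
  -- contribution of A-type and B-type paths
  have hsum0 : (∑ p ∈ P.erase p0,
      (Finset.filter (fun v : VA ⊕ VB => v.isRight) {p.1, p.2.1, p.2.2}).card) % 3 = 0 := by
    rw [Finset.sum_nat_mod]
    have hz : ∀ p ∈ P.erase p0,
        (Finset.filter (fun v : VA ⊕ VB => v.isRight) {p.1, p.2.1, p.2.2}).card % 3 = 0 := by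
      intro p hp'
      obtain ⟨hne', hpP⟩ := Finset.mem_erase.mp hp'
      obtain ⟨h12, h23, h13, -, -⟩ := hpath p hpP
      rcases hAorB p hpP hne' with ⟨x, y, z, rfl⟩ | ⟨x, y, z, rfl⟩
      · simp [Finset.filter_insert, Finset.filter_singleton]
      · have hxy : x ≠ y := fun h => h12 (by simp [h])
        have hyz : y ≠ z := fun h => h23 (by simp [h])
        have hxz : x ≠ z := fun h => h13 (by simp [h])
        have hfull : Finset.filter (fun v : VA ⊕ VB => v.isRight)
            ({Sum.inr x, Sum.inr y, Sum.inr z} : Finset (VA ⊕ VB)) =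
            {Sum.inr x, Sum.inr y, Sum.inr z} := by
          apply Finset.filter_true_of_mem
          intro t ht
          simp only [Finset.mem_insert, Finset.mem_singleton] at ht
          rcases ht with rfl | rfl | rfl <;> rfl
        rw [hfull, Finset.card_insert_of_notMem (by simp [hxy, hxz]),
          Finset.card_insert_of_notMem (by simp [hyz]), Finset.card_singleton]
    rw [Finset.sum_congr rfl hz, Finset.sum_const_zero, Nat.zero_mod]
  have htot : Fintype.card VB % 3 =
      ((Finset.filter (fun v : VA ⊕ VB => v.isRight) {p0.1, p0.2.1, p0.2.2}).card +
        ∑ p ∈ P.erase p0,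
          (Finset.filter (fun v : VA ⊕ VB => v.isRight) {p.1, p.2.1, p.2.2}).card) % 3 := by
    have hadd := Finset.add_sum_erase P
      (fun p => (Finset.filter (fun v : VA ⊕ VB => v.isRight) {p.1, p.2.1, p.2.2}).card) hp0P
    omega
  -- case analysis on the type of p0
  rcases hclass p0 hp0P with ⟨x, y, z, hp0eq⟩ | ⟨x, y, z, hp0eq⟩ | ⟨-, hp0b, hcr⟩
  · -- p0 entirely on the A side: contradiction via counting
    have hc0 : (Finset.filter (fun v : VA ⊕ VB => v.isRight) {p0.1, p0.2.1, p0.2.2}).card = 0 := by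
      rw [hp0eq]; simp [Finset.filter_insert, Finset.filter_singleton]
    omega
  · -- p0 entirely on the B side: impossible, it contains inl a1
    rw [hp0eq] at hp0a
    simp [pVerts] at hp0a
  · rcases hcr with hall1 | ⟨y0, hy0b, hy0mem, hall2⟩
    · -- the cross path meets B only in b1: build a Λ-factor of B - b1
      apply hB
      refine ⟨(P.filter allR).image (toB b1), ⟨⟨?_, ?_⟩, ?_, ?_⟩⟩
      · -- each element is a path of B
        intro q hq
        obtain ⟨p, hpmem, rfl⟩ := Finset.mem_image.mp hq
        obtain ⟨hpP, hra⟩ := Finset.mem_filter.mp hpmem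
        obtain ⟨x, y, z, rfl⟩ := allR_iff.mp hra
        rw [toB_inr]
        obtain ⟨h12, h23, h13, g1, g2⟩ := hpath _ hpP
        exact ⟨fun h => h12 (congrArg Sum.inr h), fun h => h23 (congrArg Sum.inr h),
          fun h => h13 (congrArg Sum.inr h), glue_adj_rr g1, glue_adj_rr g2⟩
      · -- pairwise disjoint
        intro q1 hq1 q2 hq2 hqne
        obtain ⟨p1, hp1mem, rfl⟩ := Finset.mem_image.mp hq1
        obtain ⟨p2, hp2mem, rfl⟩ := Finset.mem_image.mp hq2
        obtain ⟨hp1P, hra1⟩ := Finset.mem_filter.mp hp1mem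
        obtain ⟨hp2P, hra2⟩ := Finset.mem_filter.mp hp2mem
        obtain ⟨x1, y1, z1, rfl⟩ := allR_iff.mp hra1
        obtain ⟨x2, y2, z2, rfl⟩ := allR_iff.mp hra2
        rw [toB_inr] at hqne ⊢
        rw [toB_inr] at hqne ⊢
        have hpne : (Sum.inr x1, Sum.inr y1, Sum.inr z1) ≠
            ((Sum.inr x2, Sum.inr y2, Sum.inr z2) :
              (VA ⊕ VB) × (VA ⊕ VB) × (VA ⊕ VB)) := by
          intro h
          simp only [Prod.mk.injEq, Sum.inr.injEq] at h
          exact hqne (by rw [h.1, h.2.1, h.2.2])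
        have hd := hdisj _ hp1P _ hp2P hpne
        rw [Set.disjoint_left]
        intro t ht1 ht2
        simp only [pVerts, Set.mem_insert_iff, Set.mem_singleton_iff] at ht1 ht2
        have m1 : Sum.inr t ∈ pVerts ((Sum.inr x1, Sum.inr y1, Sum.inr z1) :
            (VA ⊕ VB) × (VA ⊕ VB) × (VA ⊕ VB)) := by
          simp only [pVerts, Set.mem_insert_iff, Set.mem_singleton_iff]
          rcases ht1 with rfl | rfl | rfl <;> simp
        have m2 : Sum.inr t ∈ pVerts ((Sum.inr x2, Sum.inr y2, Sum.inr z2) :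
            (VA ⊕ VB) × (VA ⊕ VB) × (VA ⊕ VB)) := by
          simp only [pVerts, Set.mem_insert_iff, Set.mem_singleton_iff]
          rcases ht2 with rfl | rfl | rfl <;> simp
        exact (Set.disjoint_left.mp hd m1) m2
      · -- vertices avoid b1
        intro q hq
        obtain ⟨p, hpmem, rfl⟩ := Finset.mem_image.mp hq
        obtain ⟨hpP, hra⟩ := Finset.mem_filter.mp hpmem
        obtain ⟨x, y, z, rfl⟩ := allR_iff.mp hra
        rw [toB_inr]
        intro t ht
        simp only [pVerts, Set.mem_insert_iff, Set.mem_singleton_iff] at ht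
        have hnep0 : ((Sum.inr x, Sum.inr y, Sum.inr z) :
            (VA ⊕ VB) × (VA ⊕ VB) × (VA ⊕ VB)) ≠ p0 := by
          intro h
          rw [← h] at hp0a
          simp [pVerts] at hp0a
        have hd := hdisj _ hpP p0 hp0P hnep0
        have hb1not : Sum.inr b1 ∉ pVerts ((Sum.inr x, Sum.inr y, Sum.inr z) :
            (VA ⊕ VB) × (VA ⊕ VB) × (VA ⊕ VB)) :=
          fun hmem => (Set.disjoint_left.mp hd hmem) hp0b
        simp only [Set.mem_compl_iff, Set.mem_singleton_iff]
        intro hteq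
        subst hteq
        apply hb1not
        simp only [pVerts, Set.mem_insert_iff, Set.mem_singleton_iff]
        rcases ht with rfl | rfl | rfl
        · exact Or.inl rfl
        · exact Or.inr (Or.inl rfl)
        · exact Or.inr (Or.inr rfl)
      · -- covers all of VB \ {b1}
        intro v hv
        simp only [Set.mem_compl_iff, Set.mem_singleton_iff] at hv
        obtain ⟨p, hpP, hpv⟩ := hcover (Sum.inr v) (Set.mem_univ _)
        have hnep0 : p ≠ p0 := by
          intro h
          rw [h] at hpv
          exact hv (Sum.inr.inj (hall1 _ hpv rfl))
        rcases hAorB p hpP hnep0 with ⟨x, y, z, rfl⟩ | ⟨x, y, z, rfl⟩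
        · simp [pVerts] at hpv
        · refine ⟨(x, y, z), Finset.mem_image.mpr
            ⟨(Sum.inr x, Sum.inr y, Sum.inr z),
              Finset.mem_filter.mpr ⟨hpP, allR_iff.mpr ⟨x, y, z, rfl⟩⟩, toB_inr b1 x y z⟩, ?_⟩
          simp only [pVerts, Set.mem_insert_iff, Set.mem_singleton_iff] at hpv ⊢
          rcases hpv with h | h | h
          · exact Or.inl (Sum.inr.inj h)
          · exact Or.inr (Or.inl (Sum.inr.inj h))
          · exact Or.inr (Or.inr (Sum.inr.inj h))
    · -- the cross path meets B in b1 and y0: contradiction via counting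
      have hc2 : (Finset.filter (fun v : VA ⊕ VB => v.isRight)
          {p0.1, p0.2.1, p0.2.2}).card = 2 := by
        have hfe : Finset.filter (fun v : VA ⊕ VB => v.isRight)
            ({p0.1, p0.2.1, p0.2.2} : Finset (VA ⊕ VB)) = {Sum.inr b1, Sum.inr y0} := by
          ext t
          simp only [Finset.mem_filter, Finset.mem_insert, Finset.mem_singleton]
          constructor
          · rintro ⟨htm, hr⟩
            exact hall2 t (mem_fin_pVerts.mp (by
              simp only [Finset.mem_insert, Finset.mem_singleton]; exact htm)) hr
          · rintro (rfl | rfl)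
            · constructor
              · have := mem_fin_pVerts.mpr hp0b
                simpa only [Finset.mem_insert, Finset.mem_singleton] using this
              · rfl
            · constructor
              · have := mem_fin_pVerts.mpr hy0mem
                simpa only [Finset.mem_insert, Finset.mem_singleton] using this
              · rfl
        rw [hfe, Finset.card_insert_of_notMem
          (by simp only [Finset.mem_singleton]; exact fun h => hy0b (Sum.inr.inj h).symm),
          Finset.card_singleton]
      omega
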